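/- Every 4-cycle trade of volume 3 has foundation at most 8. More precisely, if (T_1,T_2) is a 4-cycle bitrade of volume 3 and foundation v, then v ≤ 8. -/
import Mathlib


open Finset

/-- The edge set of the 4-cycle `(a, b, c, d)`. -/
def cyc {V : Type} [DecidableEq V] (a b c d : V) : Finset (Sym2 V) :=
  {s(a, b), s(b, c), s(c, d), s(d, a)}

/-- A finite set of edges forms a 4-cycle. -/
def IsCycle4 {V : Type} [DecidableEq V] (E : Finset (Sym2 V)) : Prop :=
  ∃ a b c d : V, a ≠ b ∧ a ≠ c ∧ a ≠ d ∧ b ≠ c ∧ b ≠ d ∧ c ≠ d ∧ E = cyc a b c d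

/-- Total edge set of a family of cycles. -/
def edgesOf {V : Type} [DecidableEq V] (T : Finset (Finset (Sym2 V))) : Finset (Sym2 V) :=
  T.biUnion id

/-- A family of pairwise edge-disjoint 4-cycles. -/
def EdgeDisjointFamily {V : Type} [DecidableEq V] (T : Finset (Finset (Sym2 V))) : Prop :=
  (∀ E ∈ T, IsCycle4 E) ∧ (T : Set (Finset (Sym2 V))).Pairwise Disjoint

/-- A 4-cycle bitrade. -/
def IsBitrade {V : Type} [DecidableEq V] (T1 T2 : Finset (Finset (Sym2 V))) : Prop :=
  EdgeDisjointFamily T1 ∧ EdgeDisjointFamily T2 ∧ Disjoint T1 T2 ∧ edgesOf T1 = edgesOf T2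

/-- The foundation: the number of vertices covered by the cycles of the family. -/
noncomputable def foundation {V : Type} [DecidableEq V] (T : Finset (Finset (Sym2 V))) : ℕ :=
  {v : V | ∃ E ∈ T, ∃ e ∈ E, v ∈ e}.ncard

variable {V : Type} [DecidableEq V]


/-- vertex set of a single edge -/
def everts {V : Type} [DecidableEq V] : Sym2 V → Finset V :=
  Sym2.lift ⟨fun x y => {x, y}, fun x y => by simp [Finset.pair_comm]⟩

@[simp] lemma everts_mk (x y : V) : everts s(x,y) = {x,y} := rfl

@[simp] lemma mem_everts {v : V} {e : Sym2 V} : v ∈ everts e ↔ v ∈ e := by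
  induction e using Sym2.ind with
  | _ x y => simp [Sym2.mem_iff]

def vset {V : Type} [DecidableEq V] (E : Finset (Sym2 V)) : Finset V :=
  E.biUnion everts

lemma mem_vset {v : V} {E : Finset (Sym2 V)} : v ∈ vset E ↔ ∃ e ∈ E, v ∈ e := by
  simp [vset]

lemma cyc_rot (a b c d : V) : cyc a b c d = cyc b c d a := by
  ext e; simp [cyc]; tauto

lemma cyc_rev (a b c d : V) : cyc a b c d = cyc a d c b := by
  ext e; simp [cyc, Sym2.eq_swap]; constructor <;> rintro (h|h|h|h) <;>
    simp [h, Sym2.eq_swap] <;> tauto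

lemma vset_cyc (a b c d : V) : vset (cyc a b c d) = {a, b, c, d} := by
  ext v; simp [cyc, mem_vset, Sym2.mem_iff]; tauto

section cycfacts
variable {a b c d : V} (hab : a ≠ b) (hac : a ≠ c) (had : a ≠ d)
  (hbc : b ≠ c) (hbd : b ≠ d) (hcd : c ≠ d)

include hab hac had hbc hbd hcd in
lemma cyc_card : (cyc a b c d).card = 4 := by
  rw [cyc, card_insert_of_notMem, card_insert_of_notMem, card_insert_of_notMem,
    card_singleton] <;> simp [Sym2.eq_iff] <;> tauto

include hab hac had hbc hbd hcd in
lemma vset_cyc_card : (vset (cyc a b c d)).card = 4 := by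
  rw [vset_cyc, card_insert_of_notMem, card_insert_of_notMem, card_insert_of_notMem,
    card_singleton] <;> simp <;> tauto

include hab hac had hbc hbd hcd in
lemma filter_cyc_a : (cyc a b c d).filter (a ∈ ·) = {s(a,b), s(a,d)} := by
  ext e
  simp only [cyc, mem_filter, mem_insert, mem_singleton]
  constructor
  · rintro ⟨(rfl|rfl|rfl|rfl), h⟩ <;> simp_all [Sym2.mem_iff, Sym2.eq_iff] <;> tauto
  · rintro (rfl|rfl) <;> simp [Sym2.mem_iff, Sym2.eq_iff] <;> tauto

lemma cyc_nondiag (e : Sym2 V) (he : e ∈ cyc a b c d) (h1 : a ≠ b) (h2 : b ≠ c)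
    (h3 : c ≠ d) (h4 : d ≠ a) : ¬ e.IsDiag := by
  simp only [cyc, mem_insert, mem_singleton] at he
  rcases he with rfl|rfl|rfl|rfl <;> simp [Sym2.mk_isDiag_iff] <;> tauto
end cycfacts


namespace IsCycle4
variable {E F : Finset (Sym2 V)} {v : V}

lemma card_eq (h : IsCycle4 E) : E.card = 4 := by
  obtain ⟨a,b,c,d,h1,h2,h3,h4,h5,h6,rfl⟩ := h
  exact cyc_card h1 h2 h3 h4 h5 h6

lemma vset_card (h : IsCycle4 E) : (vset E).card = 4 := by
  obtain ⟨a,b,c,d,h1,h2,h3,h4,h5,h6,rfl⟩ := h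
  exact vset_cyc_card h1 h2 h3 h4 h5 h6

lemma nondiag (h : IsCycle4 E) {e : Sym2 V} (he : e ∈ E) : ¬ e.IsDiag := by
  obtain ⟨a,b,c,d,h1,h2,h3,h4,h5,h6,rfl⟩ := h
  exact cyc_nondiag e he h1 h4 h6 (Ne.symm h3)

lemma rep (h : IsCycle4 E) (hv : v ∈ vset E) :
    ∃ x z y, v ≠ x ∧ v ≠ z ∧ v ≠ y ∧ x ≠ z ∧ x ≠ y ∧ z ≠ y ∧ E = cyc v x z y := by
  obtain ⟨a,b,c,d,h1,h2,h3,h4,h5,h6,rfl⟩ := h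
  rw [vset_cyc] at hv
  simp only [mem_insert, mem_singleton] at hv
  rcases hv with rfl|rfl|rfl|rfl
  · exact ⟨b,c,d,h1,h2,h3,h4,h5,h6, rfl⟩
  · exact ⟨c,d,a,h4,h5,h1.symm,h6,h2.symm,h3.symm, cyc_rot ..⟩
  · exact ⟨d,a,b,h6,h2.symm,h4.symm,h3.symm,h5.symm,h1, by rw [cyc_rot, cyc_rot]⟩
  · exact ⟨a,b,c,h3.symm,h5.symm,h6.symm,h1,h2,h4, by rw [cyc_rot, cyc_rot, cyc_rot]⟩

lemma filter_eq (h : IsCycle4 E) (hv : v ∈ vset E) :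
    ∃ x y, v ≠ x ∧ v ≠ y ∧ x ≠ y ∧ E.filter (v ∈ ·) = {s(v,x), s(v,y)} := by
  obtain ⟨x,z,y,h1,h2,h3,h4,h5,h6,rfl⟩ := h.rep hv
  exact ⟨x, y, h1, h3, h5, filter_cyc_a h1 h2 h3 h4 h5 h6⟩

lemma filter_card (h : IsCycle4 E) (hv : v ∈ vset E) :
    (E.filter (v ∈ ·)).card = 2 := by
  obtain ⟨x,y,h1,h2,h3,hf⟩ := h.filter_eq hv
  rw [hf, card_insert_of_notMem, card_singleton]
  simp [Sym2.eq_iff]; tauto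

lemma exists_mem_of_subset (h : IsCycle4 E) {D : Finset (Sym2 V)} (hD : D ⊆ E)
    (h1 : (E \ D).card ≤ 1) (hv : v ∈ vset E) : ∃ e ∈ D, v ∈ e := by
  by_contra hc
  push_neg at hc
  have hsub : E.filter (v ∈ ·) ⊆ E \ D := by
    intro e he
    simp only [mem_filter] at he
    exact mem_sdiff.2 ⟨he.1, fun hd => hc e hd he.2⟩
  have := (card_le_card hsub).trans h1
  rw [h.filter_card hv] at this
  omega
end IsCycle4

lemma vset_mono {D E : Finset (Sym2 V)} (h : D ⊆ E) : vset D ⊆ vset E := by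
  intro v hv; rw [mem_vset] at *; obtain ⟨e, he, hve⟩ := hv; exact ⟨e, h he, hve⟩

lemma cycle4_eq_of_shared {E F : Finset (Sym2 V)} (hE : IsCycle4 E) (hF : IsCycle4 F)
    (h : 3 ≤ (E ∩ F).card) : E = F := by
  set D := E ∩ F with hDdef
  have hDE : D ⊆ E := inter_subset_left
  have hDF : D ⊆ F := inter_subset_right
  have hcE : E.card = 4 := hE.card_eq
  have hcF : F.card = 4 := hF.card_eq
  have hED : (E \ D).card ≤ 1 := by
    rw [card_sdiff_of_subset hDE]; have := card_le_card hDE; omega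
  have hvEF : vset E = vset F := by
    apply eq_of_subset_of_card_le
    · intro v hv
      obtain ⟨e, heD, hve⟩ := hE.exists_mem_of_subset hDE hED hv
      exact mem_vset.2 ⟨e, hDF heD, hve⟩
    · rw [hE.vset_card, hF.vset_card]
  rcases eq_or_lt_of_le h with h3 | h4
  swap
  · -- D.card = 4, so D = E and E ⊆ F
    have hD4 : D.card = 4 := le_antisymm (by rw [← hcE]; exact card_le_card hDE) h4
    have hDEeq : D = E := eq_of_subset_of_card_le hDE (by omega)
    have : E ⊆ F := by rw [← hDEeq]; exact hDF
    exact eq_of_subset_of_card_le this (by omega)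
  · -- D.card = 3
    have hE1 : (E \ D).card = 1 := by rw [card_sdiff_of_subset hDE]; omega
    have hF1 : (F \ D).card = 1 := by rw [card_sdiff_of_subset hDF]; omega
    obtain ⟨e0, he0⟩ := card_eq_one.1 hE1
    obtain ⟨f0, hf0⟩ := card_eq_one.1 hF1
    have he0E : e0 ∈ E := (mem_sdiff.1 (he0 ▸ mem_singleton_self e0)).1
    have he0D : e0 ∉ D := (mem_sdiff.1 (he0 ▸ mem_singleton_self e0)).2
    have hf0F : f0 ∈ F := (mem_sdiff.1 (hf0 ▸ mem_singleton_self f0)).1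
    have hf0D : f0 ∉ D := (mem_sdiff.1 (hf0 ▸ mem_singleton_self f0)).2
    -- write e0 = s(p,q)
    induction e0 using Sym2.ind with
    | _ p q =>
    have hpq : p ≠ q := by
      have := hE.nondiag he0E; simpa [Sym2.mk_isDiag_iff] using this
    -- for r in vset E not p,q : r ∉ f0
    have hr : ∀ r ∈ vset F, r ≠ p → r ≠ q → r ∉ f0 := by
      intro r hrF hrp hrq hrf0
      have hrE : r ∈ vset E := hvEF ▸ hrF
      -- E-filter at r ⊆ D
      have hsubD : E.filter (r ∈ ·) ⊆ D := by
        intro e he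
        simp only [mem_filter] at he
        by_contra heD
        have : e ∈ E \ D := mem_sdiff.2 ⟨he.1, heD⟩
        rw [he0] at this
        rw [mem_singleton.1 this] at he
        simp only [Sym2.mem_iff] at he
        tauto
      -- F-filter at r has card 2, contains D-filter of card 2 plus f0
      have h1 : E.filter (r ∈ ·) ⊆ F.filter (r ∈ ·) := by
        intro e he
        simp only [mem_filter] at *
        exact ⟨hDF (hsubD (mem_filter.2 he)), he.2⟩
      have h2 : insert f0 (E.filter (r ∈ ·)) ⊆ F.filter (r ∈ ·) := by
        intro e he
        rcases mem_insert.1 he with rfl | he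
        · exact mem_filter.2 ⟨hf0F, hrf0⟩
        · exact h1 he
      have hcard : (insert f0 (E.filter (r ∈ ·))).card = 3 := by
        rw [card_insert_of_notMem (fun hc => hf0D (hsubD hc)), hE.filter_card hrE]
      have := card_le_card h2
      rw [hcard, hF.filter_card hrF] at this
      omega
    -- f0's endpoints
    induction f0 using Sym2.ind with
    | _ s1 s2 =>
    have hs1 : s1 ∈ vset F := mem_vset.2 ⟨s(s1,s2), hf0F, by simp⟩
    have hs2 : s2 ∈ vset F := mem_vset.2 ⟨s(s1,s2), hf0F, by simp⟩
    have hs12 : s1 ≠ s2 := by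
      have := hF.nondiag hf0F; simpa [Sym2.mk_isDiag_iff] using this
    have hs1pq : s1 = p ∨ s1 = q := by
      by_contra hc; push_neg at hc
      exact hr s1 hs1 hc.1 hc.2 (by simp)
    have hs2pq : s2 = p ∨ s2 = q := by
      by_contra hc; push_neg at hc
      exact hr s2 hs2 hc.1 hc.2 (by simp)
    have hef : s(s1,s2) = s(p,q) := by
      rcases hs1pq with rfl|rfl <;> rcases hs2pq with rfl|rfl <;>
        simp_all [Sym2.eq_iff]
    -- conclude
    have hEeq : E = insert s(p,q) D := by
      apply Finset.ext; intro e
      constructor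
      · intro heE
        by_cases heD : e ∈ D
        · exact mem_insert_of_mem heD
        · have : e ∈ E \ D := mem_sdiff.2 ⟨heE, heD⟩
          rw [he0, mem_singleton] at this
          rw [this]; exact mem_insert_self _ _
      · intro he
        rcases mem_insert.1 he with rfl | heD
        · exact he0E
        · exact hDE heD
    have hFeq : F = insert s(p,q) D := by
      apply Finset.ext; intro e
      constructor
      · intro heF
        by_cases heD : e ∈ D
        · exact mem_insert_of_mem heD
        · have : e ∈ F \ D := mem_sdiff.2 ⟨heF, heD⟩
          rw [hf0, mem_singleton] at this
          rw [this, hef]; exact mem_insert_self _ _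
      · intro he
        rcases mem_insert.1 he with rfl | heD
        · exact hef ▸ hf0F
        · exact hDF heD
    rw [hEeq, hFeq]




/-- multiplicity of a vertex in a family -/
def multT {V : Type} [DecidableEq V] (T : Finset (Finset (Sym2 V))) (v : V) : ℕ :=
  (T.filter (fun E => v ∈ vset E)).card

/-- degree of a vertex in an edge set -/
def degG {V : Type} [DecidableEq V] (G : Finset (Sym2 V)) (v : V) : ℕ :=
  (G.filter (v ∈ ·)).card

section family
variable {T : Finset (Finset (Sym2 V))} (hT : EdgeDisjointFamily T)

include hT in
lemma deg_eq_two_mul_mt (v : V) : degG (edgesOf T) v = 2 * multT T v := by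
  unfold degG edgesOf
  rw [filter_biUnion]
  rw [card_biUnion]
  · have : ∀ E ∈ T, ((id E).filter (v ∈ ·)).card = if v ∈ vset E then 2 else 0 := by
      intro E hE
      split_ifs with hv
      · exact (hT.1 E hE).filter_card hv
      · rw [Finset.card_eq_zero, Finset.filter_eq_empty_iff]
        intro e he hve
        exact hv (mem_vset.2 ⟨e, he, hve⟩)
    rw [Finset.sum_congr rfl this, Finset.sum_ite, Finset.sum_const, Finset.sum_const_zero,
      add_zero, smul_eq_mul, mul_comm]
    rfl
  · intro E hE E' hE' hne
    exact (hT.2 (mem_coe.2 hE) (mem_coe.2 hE') hne).mono (filter_subset _ _) (filter_subset _ _)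

include hT in
lemma edgesOf_card (h3 : T.card = 3) : (edgesOf T).card = 12 := by
  unfold edgesOf
  rw [Finset.card_biUnion (t := id)
    (fun E hE E' hE' hne => hT.2 (mem_coe.2 hE) (mem_coe.2 hE') hne)]
  have : ∀ E ∈ T, (id E).card = 4 := fun E hE => (hT.1 E hE).card_eq
  rw [Finset.sum_congr rfl this, Finset.sum_const, h3]
  rfl

lemma vset_subset_of_mem {E : Finset (Sym2 V)} (hE : E ∈ T) : vset E ⊆ vset (edgesOf T) := by
  intro v hv
  obtain ⟨e, he, hve⟩ := mem_vset.1 hv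
  exact mem_vset.2 ⟨e, mem_biUnion.2 ⟨E, hE, he⟩, hve⟩

include hT in
lemma sum_mt (h3 : T.card = 3) : ∑ v ∈ vset (edgesOf T), multT T v = 12 := by
  unfold multT
  have : ∀ v ∈ vset (edgesOf T), (T.filter (fun E => v ∈ vset E)).card
      = ∑ E ∈ T, if v ∈ vset E then 1 else 0 := fun v _ => card_filter _ _
  rw [Finset.sum_congr rfl this, Finset.sum_comm]
  have : ∀ E ∈ T, (∑ v ∈ vset (edgesOf T), if v ∈ vset E then 1 else 0) = 4 := by
    intro E hE
    rw [Finset.sum_ite_mem, Finset.inter_eq_right.2 (vset_subset_of_mem hE),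
      Finset.sum_const, (hT.1 E hE).vset_card, smul_eq_mul, mul_one]
  rw [Finset.sum_congr rfl this, Finset.sum_const, h3]
  rfl

lemma exists_cycle_of_mem_vset {v : V} (hv : v ∈ vset (edgesOf T)) :
    ∃ E ∈ T, v ∈ vset E := by
  obtain ⟨e, he, hve⟩ := mem_vset.1 hv
  obtain ⟨E, hE, heE⟩ := mem_biUnion.1 he
  exact ⟨E, hE, mem_vset.2 ⟨e, heE, hve⟩⟩

lemma one_le_mt_of_mem {v : V} (hv : v ∈ vset (edgesOf T)) : 1 ≤ multT T v := by
  obtain ⟨E, hE, hvE⟩ := exists_cycle_of_mem_vset hv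
  exact card_pos.2 ⟨E, mem_filter.2 ⟨hE, hvE⟩⟩

lemma mt_le_card (v : V) : multT T v ≤ T.card := card_le_card (filter_subset _ _)

lemma unique_cycle {v : V} (hm : multT T v = 1) {E E' : Finset (Sym2 V)}
    (hE : E ∈ T) (hE' : E' ∈ T) (hvE : v ∈ vset E) (hvE' : v ∈ vset E') : E = E' := by
  have h1 : E ∈ T.filter (fun E => v ∈ vset E) := mem_filter.2 ⟨hE, hvE⟩
  have h2 : E' ∈ T.filter (fun E => v ∈ vset E) := mem_filter.2 ⟨hE', hvE'⟩
  exact Finset.card_le_one.1 (le_of_eq hm) _ h1 _ h2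

lemma edge_in_cycle {v : V} (hm : multT T v = 1) {E : Finset (Sym2 V)}
    (hE : E ∈ T) (hvE : v ∈ vset E) {e : Sym2 V} (he : e ∈ edgesOf T) (hve : v ∈ e) :
    e ∈ E := by
  obtain ⟨E', hE', heE'⟩ := mem_biUnion.1 he
  have : E' = E := unique_cycle hm hE' hE (mem_vset.2 ⟨e, heE', hve⟩) hvE
  exact this ▸ heE'
end family

section bitrade
variable {T1 T2 : Finset (Finset (Sym2 V))} (hb : IsBitrade T1 T2)

include hb in
lemma multT_eq_of_edges {T : Finset (Finset (Sym2 V))} (hT : EdgeDisjointFamily T)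
    (hTG : edgesOf T = edgesOf T1) (v : V) : multT T v = multT T1 v := by
  have h1 := deg_eq_two_mul_mt hb.1 v
  have h2 := deg_eq_two_mul_mt hT v
  rw [hTG] at h2
  omega

include hb in
lemma multT2_eq (v : V) : multT T2 v = multT T1 v :=
  multT_eq_of_edges hb hb.2.1 hb.2.2.2.symm v

include hb in
lemma no_adjacent_singles {u w : V} (hu : multT T1 u = 1) (hw : multT T1 w = 1)
    (huw : u ≠ w) (he : s(u,w) ∈ edgesOf T1) : False := by
  obtain ⟨E, hE, heE⟩ := mem_biUnion.1 he
  have he2 : s(u,w) ∈ edgesOf T2 := hb.2.2.2 ▸ he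
  obtain ⟨F, hF, heF⟩ := mem_biUnion.1 he2
  have huE : u ∈ vset E := mem_vset.2 ⟨_, heE, by simp⟩
  have hwE : w ∈ vset E := mem_vset.2 ⟨_, heE, by simp⟩
  have huF : u ∈ vset F := mem_vset.2 ⟨_, heF, by simp⟩
  have hwF : w ∈ vset F := mem_vset.2 ⟨_, heF, by simp⟩
  have hu2 : multT T2 u = 1 := by rw [multT2_eq hb]; exact hu
  have hw2 : multT T2 w = 1 := by rw [multT2_eq hb]; exact hw
  -- all edges of E at u or w are also in F
  have hsub : E.filter (u ∈ ·) ∪ E.filter (w ∈ ·) ⊆ E ∩ F := by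
    intro e hememb
    have heE' : e ∈ E := by
      rcases mem_union.1 hememb with h' | h' <;> exact (mem_filter.1 h').1
    refine mem_inter.2 ⟨heE', ?_⟩
    have heG : e ∈ edgesOf T2 := by
      rw [← hb.2.2.2]; exact mem_biUnion.2 ⟨E, hE, heE'⟩
    rcases mem_union.1 hememb with h' | h'
    · exact edge_in_cycle hu2 hF huF heG (mem_filter.1 h').2
    · exact edge_in_cycle hw2 hF hwF heG (mem_filter.1 h').2
  -- the union has 3 elements
  have hEc : IsCycle4 E := hb.1.1 E hE
  have hFc : IsCycle4 F := hb.2.1.1 F hF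
  have hinter : E.filter (u ∈ ·) ∩ E.filter (w ∈ ·) = {s(u,w)} := by
    apply Finset.ext; intro e
    simp only [mem_inter, mem_filter, mem_singleton]
    constructor
    · rintro ⟨⟨heE', hue⟩, ⟨_, hwe⟩⟩
      exact Sym2.eq_of_ne_mem huw hue hwe (Sym2.mem_mk_left u w) (Sym2.mem_mk_right u w)
    · rintro rfl
      exact ⟨⟨heE, by simp⟩, heE, by simp⟩
  have hucard := hEc.filter_card huE
  have hwcard := hEc.filter_card hwE
  have hcu : (E.filter (u ∈ ·) ∪ E.filter (w ∈ ·)).card = 3 := by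
    have := Finset.card_union_add_card_inter (E.filter (u ∈ ·)) (E.filter (w ∈ ·))
    rw [hinter, hucard, hwcard, card_singleton] at this
    omega
  have h3le : 3 ≤ (E ∩ F).card := hcu ▸ card_le_card hsub
  have hEF : E = F := cycle4_eq_of_shared hEc hFc h3le
  exact Finset.disjoint_left.1 hb.2.2.1 hE (hEF ▸ hF)
end bitrade

lemma sum_filter_comm (B : Finset V) (G : Finset (Sym2 V)) :
    ∑ v ∈ B, (G.filter (v ∈ ·)).card = ∑ e ∈ G, (B.filter (· ∈ e)).card := by
  simp only [card_filter]
  rw [Finset.sum_comm]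

/-- vertices lying in exactly one cycle of the family -/
def Asing {V : Type} [DecidableEq V] (T1 : Finset (Finset (Sym2 V))) : Finset V :=
  (vset (edgesOf T1)).filter (fun v => multT T1 v = 1)

section counting
variable {T1 T2 : Finset (Finset (Sym2 V))} (hb : IsBitrade T1 T2)
  (h3 : T1.card = 3)

include hb in
lemma filter_A_edge_le_one {e : Sym2 V} (he : e ∈ edgesOf T1) :
    ((Asing T1).filter (· ∈ e)).card ≤ 1 := by
  apply Finset.card_le_one.2
  intro u hu w hw
  by_contra huw
  simp only [mem_filter, Asing] at hu hw
  have heq : e = s(u,w) :=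
    Sym2.eq_of_ne_mem huw hu.2 hw.2 (Sym2.mem_mk_left u w) (Sym2.mem_mk_right u w)
  exact no_adjacent_singles hb hu.1.2 hw.1.2 huw (heq ▸ he)

include hb h3 in
lemma Asing_card_le : (Asing T1).card ≤ 6 := by
  have key : ∑ v ∈ Asing T1, ((edgesOf T1).filter (v ∈ ·)).card ≤ 12 := by
    rw [sum_filter_comm]
    calc ∑ e ∈ edgesOf T1, ((Asing T1).filter (· ∈ e)).card
        ≤ ∑ _e ∈ edgesOf T1, 1 := Finset.sum_le_sum (fun e he => filter_A_edge_le_one hb he)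
      _ = 12 := by rw [Finset.sum_const, edgesOf_card hb.1 h3]; rfl
  have : ∀ v ∈ Asing T1, ((edgesOf T1).filter (v ∈ ·)).card = 2 := by
    intro v hv
    have := deg_eq_two_mul_mt hb.1 v
    unfold degG at this
    rw [this, (mem_filter.1 hv).2]
  rw [Finset.sum_congr rfl this, Finset.sum_const, smul_eq_mul] at key
  omega

include hb h3 in
lemma two_card_S_le : 2 * (vset (edgesOf T1)).card ≤ 12 + (Asing T1).card := by
  have hsum := sum_mt hb.1 h3
  have hge : ∑ v ∈ vset (edgesOf T1), (if multT T1 v = 1 then 1 else 2)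
      ≤ ∑ v ∈ vset (edgesOf T1), multT T1 v := by
    apply Finset.sum_le_sum
    intro v hv
    have h1 := one_le_mt_of_mem hv
    split_ifs with h
    · omega
    · omega
  rw [hsum] at hge
  rw [Finset.sum_ite, Finset.sum_const, Finset.sum_const, smul_eq_mul, smul_eq_mul] at hge
  have hA : (Asing T1) = (vset (edgesOf T1)).filter (fun v => multT T1 v = 1) := rfl
  have hsplit := Finset.card_filter_add_card_filter_not
    (s := vset (edgesOf T1)) (p := fun v => multT T1 v = 1)
  rw [← hA] at hsplit hge
  omega
end counting

lemma mem_edgesOf_of_mem {T : Finset (Finset (Sym2 V))} {E : Finset (Sym2 V)}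
    (hE : E ∈ T) {e : Sym2 V} (he : e ∈ E) : e ∈ edgesOf T :=
  mem_biUnion.2 ⟨E, hE, he⟩

lemma edges_nondiag {T : Finset (Finset (Sym2 V))} (hT : EdgeDisjointFamily T)
    {e : Sym2 V} (he : e ∈ edgesOf T) : ¬ e.IsDiag := by
  obtain ⟨E, hE, heE⟩ := mem_biUnion.1 he
  exact (hT.1 E hE).nondiag heE

lemma mem_cyc_edges (a x z y : V) :
    s(a,x) ∈ cyc a x z y ∧ s(x,z) ∈ cyc a x z y ∧ s(z,y) ∈ cyc a x z y ∧
      s(y,a) ∈ cyc a x z y := by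
  refine ⟨?_, ?_, ?_, ?_⟩ <;> simp [cyc]

section endgame
variable {T1 T2 : Finset (Finset (Sym2 V))} (hb : IsBitrade T1 T2)
  (h3 : T1.card = 3) (h3' : T2.card = 3)
  (hn : (vset (edgesOf T1)).card = 9)

include hb h3 hn in
lemma A_card_eq : (Asing T1).card = 6 := by
  have h1 := two_card_S_le hb h3
  have h2 := Asing_card_le hb h3
  omega

include hb h3 hn in
lemma multT_eq_two_of_not_A {v : V} (hv : v ∈ vset (edgesOf T1)) (hvA : v ∉ Asing T1) :
    multT T1 v = 2 := by
  have hAsub : Asing T1 ⊆ vset (edgesOf T1) := filter_subset _ _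
  have hsum := sum_mt hb.1 h3
  have hsplit := Finset.sum_sdiff (f := multT T1) hAsub
  have hA6 := A_card_eq hb h3 hn
  have hAsum : ∑ v ∈ Asing T1, multT T1 v = 6 := by
    have : ∀ v ∈ Asing T1, multT T1 v = 1 := fun v hv => (mem_filter.1 hv).2
    rw [Finset.sum_congr rfl this, Finset.sum_const, hA6]; rfl
  have hScard : (vset (edgesOf T1) \ Asing T1).card = 3 := by
    rw [card_sdiff_of_subset hAsub, hn, hA6]
  have hBsum : ∑ v ∈ vset (edgesOf T1) \ Asing T1, multT T1 v = 6 := by omega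
  have hB2 : ∀ v ∈ vset (edgesOf T1) \ Asing T1, 2 ≤ multT T1 v := by
    intro v hv'
    have h1 := one_le_mt_of_mem (mem_sdiff.1 hv').1
    have h2 : multT T1 v ≠ 1 := by
      intro hc
      exact (mem_sdiff.1 hv').2 (mem_filter.2 ⟨(mem_sdiff.1 hv').1, hc⟩)
    omega
  by_contra hc
  have hv' : v ∈ vset (edgesOf T1) \ Asing T1 := mem_sdiff.2 ⟨hv, hvA⟩
  have hlt : ∑ v ∈ vset (edgesOf T1) \ Asing T1, (2:ℕ) <
      ∑ v ∈ vset (edgesOf T1) \ Asing T1, multT T1 v := by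
    apply Finset.sum_lt_sum hB2
    exact ⟨v, hv', lt_of_le_of_ne (hB2 v hv') (fun h => hc h.symm)⟩
  rw [hBsum, Finset.sum_const, hScard, smul_eq_mul] at hlt
  omega

include hb h3 hn in
lemma one_A_endpoint {e : Sym2 V} (he : e ∈ edgesOf T1) :
    ((Asing T1).filter (· ∈ e)).card = 1 := by
  have hA6 := A_card_eq hb h3 hn
  have hkey : ∑ e ∈ edgesOf T1, ((Asing T1).filter (· ∈ e)).card = 12 := by
    rw [← sum_filter_comm]
    have : ∀ v ∈ Asing T1, ((edgesOf T1).filter (v ∈ ·)).card = 2 := by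
      intro v hv
      have := deg_eq_two_mul_mt hb.1 v
      unfold degG at this
      rw [this, (mem_filter.1 hv).2]
    rw [Finset.sum_congr rfl this, Finset.sum_const, hA6]
    rfl
  have hle : ∀ e ∈ edgesOf T1, ((Asing T1).filter (· ∈ e)).card ≤ 1 :=
    fun e he => filter_A_edge_le_one hb he
  by_contra hc
  have h0 : ((Asing T1).filter (· ∈ e)).card = 0 := by
    have := hle e he; omega
  have hlt : ∑ e ∈ edgesOf T1, ((Asing T1).filter (· ∈ e)).card <
      ∑ e ∈ edgesOf T1, 1 := by
    apply Finset.sum_lt_sum hle ⟨e, he, by omega⟩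
  rw [hkey, Finset.sum_const, edgesOf_card hb.1 h3, smul_eq_mul, mul_one] at hlt
  omega

include hb in
lemma notA_of_adj {u x : V} (hu : u ∈ Asing T1) (hux : s(u,x) ∈ edgesOf T1) :
    x ∉ Asing T1 := by
  intro hx
  have hne : u ≠ x := by
    have := edges_nondiag hb.1 hux; simpa [Sym2.mk_isDiag_iff] using this
  exact no_adjacent_singles hb (mem_filter.1 hu).2 (mem_filter.1 hx).2 hne hux

include hb h3 hn in
lemma inA_of_adj {x z : V} (hxz : s(x,z) ∈ edgesOf T1) (hx : x ∉ Asing T1) :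
    z ∈ Asing T1 := by
  have h1 := one_A_endpoint hb h3 hn hxz
  obtain ⟨v, hv⟩ := card_eq_one.1 h1
  have hvmem : v ∈ (Asing T1).filter (· ∈ s(x,z)) := hv ▸ mem_singleton_self v
  have hvA := (mem_filter.1 hvmem).1
  have hve := (mem_filter.1 hvmem).2
  rcases Sym2.mem_iff.1 hve with rfl | rfl
  · exact absurd hvA hx
  · exact hvA
end endgame

section endgame2
variable {T1 T2 : Finset (Finset (Sym2 V))} (hb : IsBitrade T1 T2)
  (h3 : T1.card = 3) (h3' : T2.card = 3)
  (hn : (vset (edgesOf T1)).card = 9)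

include hb in
lemma edges_of_single {a : V} (ha : a ∈ Asing T1) :
    ∃ x y, x ≠ y ∧ a ≠ x ∧ a ≠ y ∧ s(a,x) ∈ edgesOf T1 ∧ s(a,y) ∈ edgesOf T1 ∧
      (edgesOf T1).filter (a ∈ ·) = {s(a,x), s(a,y)} := by
  have hdeg : ((edgesOf T1).filter (a ∈ ·)).card = 2 := by
    have := deg_eq_two_mul_mt hb.1 a
    unfold degG at this
    rw [this, (mem_filter.1 ha).2]
  obtain ⟨e1, e2, hne, hfil⟩ := card_eq_two.1 hdeg
  have he1 : e1 ∈ (edgesOf T1).filter (a ∈ ·) := by rw [hfil]; simp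
  have he2 : e2 ∈ (edgesOf T1).filter (a ∈ ·) := by rw [hfil]; simp
  obtain ⟨x, rfl⟩ := Sym2.mem_iff_exists.1 (mem_filter.1 he1).2
  obtain ⟨y, rfl⟩ := Sym2.mem_iff_exists.1 (mem_filter.1 he2).2
  have hax : a ≠ x := by
    have := edges_nondiag hb.1 (mem_filter.1 he1).1
    simpa [Sym2.mk_isDiag_iff] using this
  have hay : a ≠ y := by
    have := edges_nondiag hb.1 (mem_filter.1 he2).1
    simpa [Sym2.mk_isDiag_iff] using this
  have hxy : x ≠ y := fun hc => hne (by rw [hc])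
  exact ⟨x, y, hxy, hax, hay, (mem_filter.1 he1).1, (mem_filter.1 he2).1, hfil⟩

include hb h3 hn in
lemma partner {T : Finset (Finset (Sym2 V))} (hT : EdgeDisjointFamily T)
    (hTG : edgesOf T = edgesOf T1) {a x y : V} (ha : a ∈ Asing T1) (hxy : x ≠ y)
    (hax : s(a,x) ∈ edgesOf T1) (hay : s(a,y) ∈ edgesOf T1) :
    ∃ E ∈ T, ∃ z, z ∈ Asing T1 ∧ z ≠ a ∧ s(z,x) ∈ edgesOf T1 ∧ s(z,y) ∈ edgesOf T1 ∧
      E = cyc a x z y := by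
  have hma : multT T a = 1 := by
    rw [multT_eq_of_edges hb hT hTG]; exact (mem_filter.1 ha).2
  have haxT : s(a,x) ∈ edgesOf T := by rw [hTG]; exact hax
  have hayT : s(a,y) ∈ edgesOf T := by rw [hTG]; exact hay
  obtain ⟨E, hE, hE1⟩ := mem_biUnion.1 haxT
  have haE : a ∈ vset E := mem_vset.2 ⟨_, hE1, by simp⟩
  have hE2 : s(a,y) ∈ E := edge_in_cycle hma hE haE hayT (by simp)
  have hcyc := hT.1 E hE
  obtain ⟨x', z, y', h1, h2, h3x, h4, h5, h6, hEeq⟩ := hcyc.rep haE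
  have hfil : E.filter (a ∈ ·) = {s(a,x'), s(a,y')} := by
    rw [hEeq]; exact filter_cyc_a h1 h2 h3x h4 h5 h6
  have hxmem : s(a,x) ∈ ({s(a,x'), s(a,y')} : Finset (Sym2 V)) := by
    rw [← hfil]; exact mem_filter.2 ⟨hE1, by simp⟩
  have hymem : s(a,y) ∈ ({s(a,x'), s(a,y')} : Finset (Sym2 V)) := by
    rw [← hfil]; exact mem_filter.2 ⟨hE2, by simp⟩
  simp only [mem_insert, mem_singleton, Sym2.eq_iff] at hxmem hymem
  have hx : x = x' ∨ x = y' := by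
    rcases hxmem with (⟨-, h⟩ | ⟨h', h''⟩) | (⟨-, h⟩ | ⟨h', h''⟩)
    · exact Or.inl h
    · exact absurd h' h1
    · exact Or.inr h
    · exact absurd h' h3x
  have hy : y = x' ∨ y = y' := by
    rcases hymem with (⟨-, h⟩ | ⟨h', h''⟩) | (⟨-, h⟩ | ⟨h', h''⟩)
    · exact Or.inl h
    · exact absurd h' h1
    · exact Or.inr h
    · exact absurd h' h3x
  have hE' : E = cyc a x z y := by
    rcases hx with rfl | rfl <;> rcases hy with rfl | rfl
    · exact absurd rfl hxy
    · exact hEeq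
    · exact hEeq.trans (cyc_rev a y z x)
    · exact absurd rfl hxy
  have hxzE : s(x,z) ∈ E := by rw [hE']; exact (mem_cyc_edges a x z y).2.1
  have hzyE : s(z,y) ∈ E := by rw [hE']; exact (mem_cyc_edges a x z y).2.2.1
  have hxzG : s(x,z) ∈ edgesOf T1 := by rw [← hTG]; exact mem_edgesOf_of_mem hE hxzE
  have hzyG : s(z,y) ∈ edgesOf T1 := by rw [← hTG]; exact mem_edgesOf_of_mem hE hzyE
  have hxA : x ∉ Asing T1 := notA_of_adj hb ha hax
  have hzA : z ∈ Asing T1 := inA_of_adj hb h3 hn hxzG hxA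
  exact ⟨E, hE, z, hzA, h2.symm, Sym2.eq_swap ▸ hxzG, hzyG, hE'⟩
end endgame2

section endgame3
variable {T1 T2 : Finset (Finset (Sym2 V))} (hb : IsBitrade T1 T2)
  (h3 : T1.card = 3) (h3' : T2.card = 3)
  (hn : (vset (edgesOf T1)).card = 9)

include hb h3 hn in
lemma class_ge {a x y : V} (ha : a ∈ Asing T1) (hxy : x ≠ y)
    (hax : s(a,x) ∈ edgesOf T1) (hay : s(a,y) ∈ edgesOf T1) :
    4 ≤ ((Asing T1).filter
      (fun b => s(b,x) ∈ edgesOf T1 ∧ s(b,y) ∈ edgesOf T1)).card := by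
  obtain ⟨E1, hE1T, z1, hz1A, hz1a, hz1x, hz1y, hE1⟩ :=
    partner hb h3 hn hb.1 rfl ha hxy hax hay
  obtain ⟨F1, hF1T, z2, hz2A, hz2a, hz2x, hz2y, hF1⟩ :=
    partner hb h3 hn hb.2.1 hb.2.2.2.symm ha hxy hax hay
  have hz12 : z1 ≠ z2 := by
    rintro rfl
    exact Finset.disjoint_left.1 hb.2.2.1 hE1T ((hF1.trans hE1.symm) ▸ hF1T)
  obtain ⟨E3, hE3T, z3, hz3A, hz3z2, hz3x, hz3y, hE3⟩ :=
    partner hb h3 hn hb.1 rfl hz2A hxy hz2x hz2y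
  have hxA : x ∉ Asing T1 := notA_of_adj hb ha hax
  have hyA : y ∉ Asing T1 := notA_of_adj hb ha hay
  have hvE1 : vset E1 = {a,x,z1,y} := by rw [hE1, vset_cyc]
  have hvE3 : vset E3 = {z2,x,z3,y} := by rw [hE3, vset_cyc]
  have hz2E1 : z2 ∉ vset E1 := by
    rw [hvE1]
    simp only [mem_insert, mem_singleton]
    rintro (rfl|rfl|rfl|rfl)
    · exact hz2a rfl
    · exact hxA hz2A
    · exact hz12 rfl
    · exact hyA hz2A
  have hma : multT T1 a = 1 := (mem_filter.1 ha).2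
  have hmz1 : multT T1 z1 = 1 := (mem_filter.1 hz1A).2
  have hz3a : z3 ≠ a := by
    rintro rfl
    have haE3 : z3 ∈ vset E3 := by rw [hvE3]; simp
    have haE1 : z3 ∈ vset E1 := by rw [hvE1]; simp
    have : E3 = E1 := unique_cycle hma hE3T hE1T haE3 haE1
    have : z2 ∈ vset E1 := by rw [← this, hvE3]; simp
    exact hz2E1 this
  have hz3z1 : z3 ≠ z1 := by
    rintro rfl
    have hzE3 : z3 ∈ vset E3 := by rw [hvE3]; simp
    have hzE1 : z3 ∈ vset E1 := by rw [hvE1]; simp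
    have : E3 = E1 := unique_cycle hmz1 hE3T hE1T hzE3 hzE1
    have : z2 ∈ vset E1 := by rw [← this, hvE3]; simp
    exact hz2E1 this
  have hsub : ({a, z1, z2, z3} : Finset V) ⊆
      (Asing T1).filter (fun b => s(b,x) ∈ edgesOf T1 ∧ s(b,y) ∈ edgesOf T1) := by
    intro c hc
    simp only [mem_insert, mem_singleton] at hc
    rcases hc with rfl|rfl|rfl|rfl
    · exact mem_filter.2 ⟨ha, hax, hay⟩
    · exact mem_filter.2 ⟨hz1A, hz1x, hz1y⟩
    · exact mem_filter.2 ⟨hz2A, hz2x, hz2y⟩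
    · exact mem_filter.2 ⟨hz3A, hz3x, hz3y⟩
  have hcard : ({a, z1, z2, z3} : Finset V).card = 4 := by
    rw [card_insert_of_notMem, card_insert_of_notMem, card_insert_of_notMem,
      card_singleton] <;> simp <;>
      first
      | exact hz12
      | exact ⟨fun hc => hz1a hc.symm, fun hc => hz2a hc.symm, fun hc => hz3a hc.symm⟩
      | exact ⟨hz12, fun hc => hz3z1 hc.symm⟩
      | exact fun hc => hz3z2 hc.symm
  calc 4 = ({a, z1, z2, z3} : Finset V).card := hcard.symm
    _ ≤ _ := card_le_card hsub

include hb h3 hn in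
lemma class_le {a x y : V} (ha : a ∈ Asing T1) (hax : s(a,x) ∈ edgesOf T1) :
    ((Asing T1).filter
      (fun b => s(b,x) ∈ edgesOf T1 ∧ s(b,y) ∈ edgesOf T1)).card ≤ 4 := by
  have hxA : x ∉ Asing T1 := notA_of_adj hb ha hax
  have hxS : x ∈ vset (edgesOf T1) := mem_vset.2 ⟨_, hax, by simp⟩
  have hm2 : multT T1 x = 2 := multT_eq_two_of_not_A hb h3 hn hxS hxA
  have hdeg : ((edgesOf T1).filter (x ∈ ·)).card = 4 := by
    have := deg_eq_two_mul_mt hb.1 x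
    unfold degG at this
    rw [this, hm2]
  rw [← hdeg]
  apply Finset.card_le_card_of_injOn (fun b => s(b,x))
  · intro b hb'
    exact mem_filter.2 ⟨(mem_filter.1 hb').2.1, by simp⟩
  · intro b hb' b' hb'' heq
    simp only [Sym2.eq_iff] at heq
    rcases heq with ⟨h1, -⟩ | ⟨h1, h2⟩
    · exact h1
    · exact absurd ((mem_filter.1 (mem_coe.1 hb')).1) (h1 ▸ hxA)

include hb h3 h3' hn in
lemma no_nine : False := by
  have hA6 := A_card_eq hb h3 hn
  obtain ⟨a, ha⟩ : (Asing T1).Nonempty := card_pos.1 (by omega)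
  obtain ⟨x, y, hxy, hax, hay, haxG, hayG, hafil⟩ := edges_of_single hb ha
  set K := (Asing T1).filter
    (fun b => s(b,x) ∈ edgesOf T1 ∧ s(b,y) ∈ edgesOf T1) with hKdef
  have hK4 : K.card = 4 :=
    le_antisymm (class_le hb h3 hn ha haxG) (class_ge hb h3 hn ha hxy haxG hayG)
  have hKsubA : K ⊆ Asing T1 := filter_subset _ _
  have hAK2 : (Asing T1 \ K).card = 2 := by rw [card_sdiff_of_subset hKsubA, hA6, hK4]
  obtain ⟨b, hbmem⟩ : (Asing T1 \ K).Nonempty := card_pos.1 (by omega)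
  have hbA : b ∈ Asing T1 := (mem_sdiff.1 hbmem).1
  have hbK : b ∉ K := (mem_sdiff.1 hbmem).2
  obtain ⟨x', y', hxy', hbx, hby, hbxG, hbyG, hbfil⟩ := edges_of_single hb hbA
  have h4le' := class_ge hb h3 hn hbA hxy' hbxG hbyG
  have hK'sub : (Asing T1).filter
      (fun c => s(c,x') ∈ edgesOf T1 ∧ s(c,y') ∈ edgesOf T1) ⊆ Asing T1 \ K := by
    intro c hc
    have hcA : c ∈ Asing T1 := (mem_filter.1 hc).1
    refine mem_sdiff.2 ⟨hcA, fun hcK => ?_⟩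
    obtain ⟨xc, yc, hxyc, hcx, hcy, hcxG, hcyG, hcfil⟩ := edges_of_single hb hcA
    have red : ∀ w, s(c,w) ∈ edgesOf T1 → w = xc ∨ w = yc := by
      intro w hw
      have : s(c,w) ∈ ({s(c,xc), s(c,yc)} : Finset (Sym2 V)) := by
        rw [← hcfil]; exact mem_filter.2 ⟨hw, by simp⟩
      simp only [mem_insert, mem_singleton, Sym2.eq_iff] at this
      rcases this with (⟨-, h⟩ | ⟨h', -⟩) | (⟨-, h⟩ | ⟨h', -⟩)
      · exact Or.inl h
      · exact absurd h' hcx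
      · exact Or.inr h
      · exact absurd h' hcy
    have rx := red x (mem_filter.1 hcK).2.1
    have ry := red y (mem_filter.1 hcK).2.2
    have rx' := red x' (mem_filter.1 hc).2.1
    have ry' := red y' (mem_filter.1 hc).2.2
    -- {x', y'} = {x, y}, so b is adjacent to x and y, i.e. b ∈ K
    have hbK' : b ∈ K := by
      rw [hKdef]
      refine mem_filter.2 ⟨hbA, ?_, ?_⟩ <;>
      · rcases rx with rfl | rfl <;> rcases ry with rfl | rfl <;>
          rcases rx' with rfl | rfl <;> rcases ry' with rfl | rfl <;>
          first
            | exact hbxG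
            | exact hbyG
            | exact absurd rfl hxy
            | exact absurd rfl hxy'
    exact hbK hbK'
  have := le_trans h4le' (card_le_card hK'sub)
  omega
end endgame3

theorem trade_volume3_foundation_le_eight {V : Type} [DecidableEq V]
    (T1 T2 : Finset (Finset (Sym2 V))) (h : IsBitrade T1 T2)
    (h3 : T1.card = 3) (h3' : T2.card = 3) :
    foundation T1 ≤ 8 := by
  have hset : {v : V | ∃ E ∈ T1, ∃ e ∈ E, v ∈ e} = ↑(vset (edgesOf T1)) := by
    ext v
    simp only [Set.mem_setOf_eq, Finset.coe_sort_coe, mem_coe, mem_vset, edgesOf, mem_biUnion]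
    constructor
    · rintro ⟨E, hE, e, he, hve⟩; exact ⟨e, ⟨E, hE, he⟩, hve⟩
    · rintro ⟨e, ⟨E, hE, he⟩, hve⟩; exact ⟨E, hE, e, he, hve⟩
  have hf : foundation T1 = (vset (edgesOf T1)).card := by
    rw [foundation, hset, Set.ncard_coe_finset]
  rw [hf]
  by_contra hgt
  push_neg at hgt
  have h1 := two_card_S_le h h3
  have h2 := Asing_card_le h h3
  have h9 : (vset (edgesOf T1)).card = 9 := by omega
  exact no_nine h h3 h3' h9
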